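/- arXiv:2306.17159 — 3 statements merged into one kernel-verified Lean document; each statement's English description precedes it below -/
import Mathlib

section
/- On four qubits (with qubits labelled p, q, r, s in tensor-product order), let A = (1/8)(X_r Y_s X_p X_q + Y_r X_s X_p X_q + Y_r Y_s Y_p X_q + Y_r Y_s X_p Y_q − X_r X_s Y_p X_q − X_r X_s X_p Y_q − Y_r X_s Y_p Y_q − X_r Y_s Y_p Y_q). Then A applied to any computational basis vector other than |1_p 1_q 0_r 0_s⟩ and |0_p 0_q 1_r 1_s⟩ equals the zero vector. -/
open Matrix

/-- The Pauli `X` matrix. -/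
noncomputable def PX : Matrix (Fin 2) (Fin 2) ℂ := !![0, 1; 1, 0]

/-- The Pauli `Y` matrix. -/
noncomputable def PY : Matrix (Fin 2) (Fin 2) ℂ := !![0, -Complex.I; Complex.I, 0]

/-- The Pauli `Z` matrix. -/
noncomputable def PZ : Matrix (Fin 2) (Fin 2) ℂ := !![1, 0; 0, -1]

/-- The operator on `N` qubits acting as the single-qubit operator `M` on qubit `k`
and as the identity on all other qubits (the `N`-qubit space, i.e. the `N`-fold tensor
product of `ℂ²`, is indexed by functions `Fin N → Fin 2`). -/
noncomputable def opN (N k : ℕ) (M : Matrix (Fin 2) (Fin 2) ℂ) :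
    Matrix (Fin N → Fin 2) (Fin N → Fin 2) ℂ :=
  Matrix.of fun v w =>
    ∏ j : Fin N, if (j : ℕ) = k then M (v j) (w j) else (if v j = w j then 1 else 0)

/-- The double-qubit excitation generator `A_{pqrs}` on four qubits
labelled `p = 0`, `q = 1`, `r = 2`, `s = 3` (in tensor-product order). -/
noncomputable def Aop : Matrix (Fin 4 → Fin 2) (Fin 4 → Fin 2) ℂ :=
  (1 / 8 : ℂ) •
    (opN 4 2 PX * opN 4 3 PY * opN 4 0 PX * opN 4 1 PX
      + opN 4 2 PY * opN 4 3 PX * opN 4 0 PX * opN 4 1 PX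
      + opN 4 2 PY * opN 4 3 PY * opN 4 0 PY * opN 4 1 PX
      + opN 4 2 PY * opN 4 3 PY * opN 4 0 PX * opN 4 1 PY
      - opN 4 2 PX * opN 4 3 PX * opN 4 0 PY * opN 4 1 PX
      - opN 4 2 PX * opN 4 3 PX * opN 4 0 PX * opN 4 1 PY
      - opN 4 2 PY * opN 4 3 PX * opN 4 0 PY * opN 4 1 PY
      - opN 4 2 PX * opN 4 3 PY * opN 4 0 PY * opN 4 1 PY)

/-- The computational basis vector of the four-qubit space labelled by `b`. -/
noncomputable def ket (b : Fin 4 → Fin 2) : (Fin 4 → Fin 2) → ℂ :=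
  fun v => if v = b then 1 else 0

/-! Each of the eight Pauli strings in `A` flips all four qubits, so `A |b⟩` is a multiple of the
bitwise complement of `|b⟩`. Since `X |a⟩ = |1 - a⟩` and `Y |a⟩ = i (-1)^a |1 - a⟩`, with
`s = (-1)^b` the multiple is `(i/8) ((s_r + s_s)(1 + s_p s_q) - (s_p + s_q)(1 + s_r s_s))`.
Both products vanish unless `s_p = s_q` and `s_r = s_s`, and then the difference is
`4 (s_r - s_p)`, which vanishes unless `b` is `1100` or `0011`. -/

section TensorOp

variable {ι κ R : Type*} [Fintype ι] [CommSemiring R]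

def tensorOp (f : ι → Matrix κ κ R) : Matrix (ι → κ) (ι → κ) R :=
  of fun v w => ∏ j, f j (v j) (w j)

@[simp]
lemma tensorOp_apply (f : ι → Matrix κ κ R) (v w : ι → κ) :
    tensorOp f v w = ∏ j, f j (v j) (w j) :=
  rfl

lemma tensorOp_mul [DecidableEq ι] [Fintype κ] (f g : ι → Matrix κ κ R) :
    tensorOp f * tensorOp g = tensorOp (f * g) := by
  ext v w
  simp only [mul_apply, tensorOp_apply, Pi.mul_apply, ← Finset.prod_mul_distrib,
    Fintype.prod_sum]

end TensorOp

lemma opN_eq_tensorOp (N k : ℕ) (M : Matrix (Fin 2) (Fin 2) ℂ) :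
    opN N k M = tensorOp fun j : Fin N => if (j : ℕ) = k then M else 1 := by
  ext v w
  simp only [opN, of_apply, tensorOp_apply]
  exact Finset.prod_congr rfl fun j _ => by split_ifs <;> simp_all [one_apply]

lemma opN_mul_opN_mul_opN_mul_opN (M₀ M₁ M₂ M₃ : Matrix (Fin 2) (Fin 2) ℂ) :
    opN 4 2 M₂ * opN 4 3 M₃ * opN 4 0 M₀ * opN 4 1 M₁ = tensorOp ![M₀, M₁, M₂, M₃] := by
  simp only [opN_eq_tensorOp, tensorOp_mul]
  congr 1
  funext j
  fin_cases j <;> simp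

lemma ket_eq_single (b : Fin 4 → Fin 2) : ket b = Pi.single b 1 := by
  ext v
  simp [ket, Pi.single_apply]

/-- The eigenvalue `(-1)^a` of `Z` on `|a⟩`. -/
def spin (a : Fin 2) : ℂ := (-1) ^ (a : ℕ)

lemma PX_apply (a c : Fin 2) : PX a c = if a = c then 0 else 1 := by
  fin_cases a <;> fin_cases c <;> simp [PX]

lemma PY_apply (a c : Fin 2) : PY a c = if a = c then 0 else Complex.I * spin c := by
  fin_cases a <;> fin_cases c <;> simp [PY, spin]

lemma spin_add_spin_of_ne {a c : Fin 2} (h : a ≠ c) : spin a + spin c = 0 := by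
  fin_cases a <;> fin_cases c <;> simp_all [spin]

lemma one_add_spin_mul_spin_of_ne {a c : Fin 2} (h : a ≠ c) : 1 + spin a * spin c = 0 := by
  fin_cases a <;> fin_cases c <;> simp_all [spin]

lemma Aop_apply_of_eq {v b : Fin 4 → Fin 2} {j : Fin 4} (h : v j = b j) : Aop v b = 0 := by
  simp only [Aop, Matrix.smul_apply, Matrix.add_apply, Matrix.sub_apply,
    opN_mul_opN_mul_opN_mul_opN, tensorOp_apply, Fin.prod_univ_four, Matrix.cons_val,
    PX_apply, PY_apply]
  fin_cases j <;> simp_all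

lemma Aop_apply_of_forall_ne {v b : Fin 4 → Fin 2} (h : ∀ j, v j ≠ b j) :
    Aop v b = Complex.I / 8 *
      ((spin (b 2) + spin (b 3)) * (1 + spin (b 0) * spin (b 1))
        - (spin (b 0) + spin (b 1)) * (1 + spin (b 2) * spin (b 3))) := by
  simp only [Aop, Matrix.smul_apply, Matrix.add_apply, Matrix.sub_apply,
    opN_mul_opN_mul_opN_mul_opN, tensorOp_apply, Fin.prod_univ_four, Matrix.cons_val,
    PX_apply, PY_apply, h, if_false, smul_eq_mul]
  linear_combination Complex.I / 8 *
    (spin (b 0) * spin (b 2) * spin (b 3) + spin (b 1) * spin (b 2) * spin (b 3)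
      - spin (b 0) * spin (b 1) * spin (b 2) - spin (b 0) * spin (b 1) * spin (b 3)) * Complex.I_sq

lemma spin_amplitude_eq_zero {b : Fin 4 → Fin 2} (h1 : b ≠ ![1, 1, 0, 0])
    (h2 : b ≠ ![0, 0, 1, 1]) :
    (spin (b 2) + spin (b 3)) * (1 + spin (b 0) * spin (b 1))
      - (spin (b 0) + spin (b 1)) * (1 + spin (b 2) * spin (b 3)) = 0 := by
  by_cases h01 : b 0 = b 1
  swap
  · rw [spin_add_spin_of_ne h01, one_add_spin_mul_spin_of_ne h01]
    ring
  by_cases h23 : b 2 = b 3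
  swap
  · rw [spin_add_spin_of_ne h23, one_add_spin_mul_spin_of_ne h23]
    ring
  have h02 : b 0 = b 2 := by
    have hb : b = ![b 0, b 0, b 2, b 2] := by
      ext j
      fin_cases j <;> simp [h01, h23]
    rw [hb] at h1 h2
    revert h1 h2
    generalize b 0 = x, b 2 = y
    revert x y
    decide
  rw [← h01, ← h23, ← h02]
  ring

/-- `A` annihilates every computational basis vector other than
`|1_p 1_q 0_r 0_s⟩` and `|0_p 0_q 1_r 1_s⟩`. -/
theorem Aop_mulVec_ket_eq_zero (b : Fin 4 → Fin 2)
    (h1 : b ≠ ![1, 1, 0, 0]) (h2 : b ≠ ![0, 0, 1, 1]) :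
    Aop.mulVec (ket b) = 0 := by
  ext v
  rw [ket_eq_single, mulVec_single_one, col_apply, Pi.zero_apply]
  by_cases hv : ∃ j, v j = b j
  · obtain ⟨j, hj⟩ := hv
    exact Aop_apply_of_eq hj
  · rw [Aop_apply_of_forall_ne fun j hj => hv ⟨j, hj⟩, spin_amplitude_eq_zero h1 h2, mul_zero]
end

section
/- On four qubits (with qubits labelled p, q, r, s in tensor-product order), let A = (1/8)(X_r Y_s X_p X_q + Y_r X_s X_p X_q + Y_r Y_s Y_p X_q + Y_r Y_s X_p Y_q − X_r X_s Y_p X_q − X_r X_s X_p Y_q − Y_r X_s Y_p Y_q − X_r Y_s Y_p Y_q). Then A³ = A. -/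
/-!
In the computational basis `X` and `Y` both flip a bit, so each of the eight Pauli strings
sends `|v⟩` to a multiple of the complementary basis vector. The eight phases cancel except
for `v = |0011⟩` and `v = |1100⟩` (qubits in the order `p q r s`), where they add up to `±8i`:
thus `A = i |0011⟩⟨1100| - i |1100⟩⟨0011|`. An operator `c |a⟩⟨b| + d |b⟩⟨a|` with `a ≠ b`
cubes to `c d` times itself, and here `c d = 1`.
-/

open Matrix

namespace Matrix

variable {ι m R : Type*} [Fintype ι] [CommSemiring R]

def piKron (Ms : ι → Matrix m m R) : Matrix (ι → m) (ι → m) R :=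
  of fun v w => ∏ j, Ms j (v j) (w j)

@[simp]
theorem piKron_apply (Ms : ι → Matrix m m R) (v w : ι → m) :
    piKron Ms v w = ∏ j, Ms j (v j) (w j) := rfl

theorem piKron_mul [DecidableEq ι] [Fintype m] (Ms Ns : ι → Matrix m m R) :
    piKron Ms * piKron Ns = piKron (Ms * Ns) := by
  ext v w
  simp only [piKron_apply, mul_apply, Pi.mul_apply, ← Finset.prod_mul_distrib]
  exact (Fintype.prod_sum fun j x => Ms j (v j) x * Ns j x (w j)).symm

theorem single_add_single_pow_three {n : Type*} [Fintype n] [DecidableEq n] {a b : n}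
    (hab : a ≠ b) (c d : R) :
    (single a b c + single b a d) ^ 3 = (c * d) • (single a b c + single b a d) := by
  simp only [pow_succ, pow_zero, one_mul, add_mul, mul_add, single_mul_single_same,
    single_mul_single_of_ne _ _ _ _ hab, single_mul_single_of_ne _ _ _ _ hab.symm, zero_add,
    add_zero, smul_add, smul_single, smul_eq_mul, mul_comm d c]

end Matrix

open Matrix

theorem opN_eq_piKron (N k : ℕ) (M : Matrix (Fin 2) (Fin 2) ℂ) :
    opN N k M = piKron fun j : Fin N => if (j : ℕ) = k then M else 1 := by
  ext v w
  simp only [opN, piKron_apply, of_apply]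
  refine Finset.prod_congr rfl fun j _ => ?_
  split_ifs <;> simp [one_apply, *]

theorem opN_mul_opN_mul_opN_mul_opN_apply (A B C D : Matrix (Fin 2) (Fin 2) ℂ)
    (v w : Fin 4 → Fin 2) :
    (opN 4 2 A * opN 4 3 B * opN 4 0 C * opN 4 1 D) v w =
      C (v 0) (w 0) * D (v 1) (w 1) * A (v 2) (w 2) * B (v 3) (w 3) := by
  simp only [opN_eq_piKron, piKron_mul, piKron_apply, Fin.prod_univ_four, Pi.mul_apply]
  simp

theorem Aop_eq : Aop = single ![0, 0, 1, 1] ![1, 1, 0, 0] Complex.I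
    + single ![1, 1, 0, 0] ![0, 0, 1, 1] (-Complex.I) := by
  ext v w
  obtain ⟨v0, v1, v2, v3, rfl⟩ : ∃ a b c d, v = ![a, b, c, d] :=
    ⟨v 0, v 1, v 2, v 3, by ext j; fin_cases j <;> rfl⟩
  obtain ⟨w0, w1, w2, w3, rfl⟩ : ∃ a b c d, w = ![a, b, c, d] :=
    ⟨w 0, w 1, w 2, w 3, by ext j; fin_cases j <;> rfl⟩
  simp only [Aop, Matrix.smul_apply, Matrix.add_apply, Matrix.sub_apply,
    opN_mul_opN_mul_opN_mul_opN_apply, single_apply, vecCons_inj, smul_eq_mul, cons_val_zero,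
    cons_val_one, cons_val_two, cons_val_three, PX, PY]
  fin_cases v0 <;> fin_cases v1 <;> fin_cases v2 <;> fin_cases v3 <;>
    fin_cases w0 <;> fin_cases w1 <;> fin_cases w2 <;> fin_cases w3 <;>
    norm_num <;> ring

/-- `A³ = A`. -/
theorem Aop_pow_three : Aop ^ 3 = Aop := by
  rw [Aop_eq, single_add_single_pow_three (by decide), mul_neg, Complex.I_mul_I, neg_neg, one_smul]
end

section
/- Let N ≥ 3, let H = h·∑_{k=0}^{N−1} X_k + J·∑_{k=0}^{N−2} Z_k Z_{k+1} be the transverse-field Ising Hamiltonian on N qubits with h, J ∈ ℝ, let ψ be any vector in the N-qubit space, let θ ∈ ℝ, and let p be an index with 0 ≤ p < N−2. Then ⟨ψ, exp(iθ Z_p Y_{p+1}) H exp(−iθ Z_p Y_{p+1}) ψ⟩ = ⟨ψ, Hψ⟩ + sin(2θ)·⟨ψ, h(Z_p Z_{p+1} − Y_p Y_{p+1}) ψ⟩ − sin(2θ)·⟨ψ, J(X_{p+1} + Z_p X_{p+1} Z_{p+2}) ψ⟩ − 2 sin²(θ)·⟨ψ, (h X_p + h X_{p+1} + J Z_p Z_{p+1}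 + J Z_{p+1} Z_{p+2}) ψ⟩. -/
open Matrix

/-- The transverse-field Ising Hamiltonian
`H = h ∑_{k=0}^{N−1} X_k + J ∑_{k=0}^{N−2} Z_k Z_{k+1}` on `N` qubits. -/
noncomputable def IsingH (N : ℕ) (h J : ℝ) :
    Matrix (Fin N → Fin 2) (Fin N → Fin 2) ℂ :=
  (h : ℂ) • ∑ k ∈ Finset.range N, opN N k PX
    + (J : ℂ) • ∑ k ∈ Finset.range (N - 1), opN N k PZ * opN N (k + 1) PZ

/-!
The generator `A = Z_p Y_{p+1}` squares to the identity, so `exp (z • A) = cosh z + sinh z • A`.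
Each term of `H` either commutes or anticommutes with `A`; the anticommuting ones sum to
`K = h X_p + h X_{p+1} + J Z_p Z_{p+1} + J Z_{p+1} Z_{p+2}`. Conjugation fixes the commuting part,
while `exp (z • A) * K * exp (-z • A) = K * exp (-2z • A) = cosh (2z) • K + sinh (2z) • A K`.
At `z = iθ` this is `K - 2 sin² θ • K + sin 2θ • i A K`, and `i A K` is computed qubit by qubit
from the Pauli multiplication table.
-/

open Complex

section Involution

open NormedSpace

variable {𝔸 : Type*} [Ring 𝔸] [Algebra ℂ 𝔸] [TopologicalSpace 𝔸] [IsTopologicalRing 𝔸]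
  [T2Space 𝔸] [ContinuousSMul ℂ 𝔸] {A : 𝔸}

theorem exp_smul_of_mul_self_eq_one (hA : A * A = 1) (z : ℂ) :
    exp (z • A) = cosh z • 1 + sinh z • A := by
  have hpow_even (n : ℕ) : A ^ (2 * n) = 1 := by rw [pow_mul, sq, hA, one_pow]
  rw [exp_eq_tsum ℂ]
  refine HasSum.tsum_eq (HasSum.even_add_odd ?_ ?_)
  · convert (hasSum_cosh z).smul_const (1 : 𝔸) using 2 with n
    rw [smul_pow, hpow_even, smul_smul, div_eq_inv_mul]
  · convert (hasSum_sinh z).smul_const A using 2 with n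
    rw [smul_pow, pow_succ A, hpow_even, one_mul, smul_smul, div_eq_inv_mul]

theorem exp_smul_mul_exp_smul_of_mul_self_eq_one (hA : A * A = 1) (z w : ℂ) :
    exp (z • A) * exp (w • A) = exp ((z + w) • A) := by
  simp only [exp_smul_of_mul_self_eq_one hA, cosh_add, sinh_add, add_mul, mul_add,
    smul_mul_smul, one_mul, mul_one, hA]
  module

theorem exp_smul_mul_of_anticommute (hA : A * A = 1) {K : 𝔸} (hK : A * K = -(K * A)) (z : ℂ) :
    exp (z • A) * K = K * exp ((-z) • A) := by
  simp only [exp_smul_of_mul_self_eq_one hA, cosh_neg, sinh_neg, add_mul, mul_add,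
    smul_mul_assoc, mul_smul_comm, one_mul, mul_one, hK]
  module

theorem exp_smul_mul_add_mul_exp_neg_smul (hA : A * A = 1) {C K : 𝔸} (hC : Commute A C)
    (hK : A * K = -(K * A)) (z : ℂ) :
    exp (z • A) * (C + K) * exp ((-z) • A) = C + cosh (2 * z) • K + sinh (2 * z) • (A * K) := by
  calc exp (z • A) * (C + K) * exp ((-z) • A)
      = C * (exp (z • A) * exp ((-z) • A)) + K * (exp ((-z) • A) * exp ((-z) • A)) := by
        rw [mul_add, add_mul, (hC.smul_left z).exp_left.eq, exp_smul_mul_of_anticommute hA hK,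
          mul_assoc, mul_assoc]
    _ = C + K * exp ((-(2 * z)) • A) := by
        rw [exp_smul_mul_exp_smul_of_mul_self_eq_one hA,
          exp_smul_mul_exp_smul_of_mul_self_eq_one hA, add_neg_cancel, zero_smul,
          NormedSpace.exp_zero, mul_one, two_mul, neg_add]
    _ = C + cosh (2 * z) • K + sinh (2 * z) • (A * K) := by
        rw [exp_smul_of_mul_self_eq_one hA, cosh_neg, sinh_neg, hK]
        simp only [mul_add, mul_smul_comm, mul_one]
        module

theorem exp_I_smul_mul_add_mul_exp_neg_I_smul (hA : A * A = 1) {C K : 𝔸} (hC : Commute A C)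
    (hK : A * K = -(K * A)) (θ : ℝ) :
    exp ((I * θ) • A) * (C + K) * exp ((-(I * θ)) • A)
      = C + K + (Real.sin (2 * θ) : ℂ) • (I • (A * K)) - (2 * (Real.sin θ : ℂ) ^ 2) • K := by
  have h2θ : 2 * (I * θ) = (2 * θ : ℂ) * I := by ring
  rw [exp_smul_mul_add_mul_exp_neg_smul hA hC hK, h2θ, cosh_mul_I, sinh_mul_I,
    cos_two_mul_eq_one_sub]
  push_cast
  module

end Involution

namespace Matrix

variable {ι n R : Type*} [Fintype ι] [CommSemiring R]

def kronPi (f : ι → Matrix n n R) : Matrix (ι → n) (ι → n) R :=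
  of fun v w => ∏ j, f j (v j) (w j)

theorem kronPi_mul_kronPi [DecidableEq ι] [Fintype n] (f g : ι → Matrix n n R) :
    kronPi f * kronPi g = kronPi (f * g) := by
  ext v w
  simp only [kronPi, mul_apply, of_apply, Pi.mul_apply, ← Finset.prod_mul_distrib]
  exact (Fintype.prod_sum fun j x => f j (v j) x * g j x (w j)).symm

theorem kronPi_one [DecidableEq n] : kronPi (1 : ι → Matrix n n R) = 1 := by
  ext v w
  by_cases hvw : v = w
  · simp [kronPi, hvw, one_apply]
  · obtain ⟨j, hj⟩ := Function.ne_iff.mp hvw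
    simpa [kronPi, one_apply, hvw] using Finset.prod_eq_zero (Finset.mem_univ j) (if_neg hj)

theorem kronPi_eq_smul_kronPi [DecidableEq ι] {f g : ι → Matrix n n R} (k : ι) (c : R)
    (hk : f k = c • g k) (hj : ∀ j ≠ k, f j = g j) : kronPi f = c • kronPi g := by
  ext v w
  simp only [kronPi, of_apply, smul_apply, smul_eq_mul]
  rw [← Finset.mul_prod_erase _ _ (Finset.mem_univ k),
    ← Finset.mul_prod_erase _ (fun j => g j (v j) (w j)) (Finset.mem_univ k), hk, smul_apply,
    smul_eq_mul, mul_assoc]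
  congr 2
  exact Finset.prod_congr rfl fun j hj' => by rw [hj j (Finset.ne_of_mem_erase hj')]

end Matrix

theorem opN_eq_kronPi (N k : ℕ) (M : Matrix (Fin 2) (Fin 2) ℂ) :
    opN N k M = kronPi fun j : Fin N => if (j : ℕ) = k then M else 1 := by
  ext v w
  simp only [opN, kronPi, of_apply]
  refine Finset.prod_congr rfl fun j _ => ?_
  split_ifs <;> simp [one_apply, *]

theorem PX_mul_PY : PX * PY = I • PZ := by
  ext i j; fin_cases i <;> fin_cases j <;> simp [PX, PY, PZ, mul_apply]

theorem PY_mul_PX : PY * PX = -I • PZ := by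
  ext i j; fin_cases i <;> fin_cases j <;> simp [PX, PY, PZ, mul_apply]

theorem PY_mul_PZ : PY * PZ = I • PX := by
  ext i j; fin_cases i <;> fin_cases j <;> simp [PX, PY, PZ, mul_apply]

theorem PZ_mul_PY : PZ * PY = -I • PX := by
  ext i j; fin_cases i <;> fin_cases j <;> simp [PX, PY, PZ, mul_apply]

theorem PZ_mul_PX : PZ * PX = I • PY := by
  ext i j; fin_cases i <;> fin_cases j <;> simp [PX, PY, PZ, mul_apply]

theorem PX_mul_PZ : PX * PZ = -I • PY := by
  ext i j; fin_cases i <;> fin_cases j <;> simp [PX, PY, PZ, mul_apply]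

theorem PY_mul_PY : PY * PY = 1 := by
  ext i j; fin_cases i <;> fin_cases j <;> simp [PY, mul_apply, one_apply]

theorem PZ_mul_PZ : PZ * PZ = 1 := by
  ext i j; fin_cases i <;> fin_cases j <;> simp [PZ, mul_apply, one_apply]

section ZYGenerator

variable {N p : ℕ}

local notation "ZY" => opN N p PZ * opN N (p + 1) PY

theorem ZY_mul_ZY : ZY * ZY = 1 := by
  simp only [opN_eq_kronPi, kronPi_mul_kronPi, ← kronPi_one]
  congr 1 with j : 1
  simp only [Pi.mul_apply, Pi.one_apply]
  split_ifs <;> simp_all [PZ_mul_PZ, PY_mul_PY]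

theorem commute_ZY_X {k : ℕ} (hkp : k ≠ p) (hkp' : k ≠ p + 1) : Commute ZY (opN N k PX) := by
  simp only [opN_eq_kronPi, Commute, SemiconjBy, kronPi_mul_kronPi]
  congr 1 with j : 1
  simp only [Pi.mul_apply]
  split_ifs <;> simp_all

theorem commute_ZY_ZZ {k : ℕ} (hkp : k ≠ p) (hkp' : k ≠ p + 1) :
    Commute ZY (opN N k PZ * opN N (k + 1) PZ) := by
  simp only [opN_eq_kronPi, Commute, SemiconjBy, kronPi_mul_kronPi]
  congr 1 with j : 1
  simp only [Pi.mul_apply]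
  split_ifs <;> simp_all

theorem ZY_anticomm_X_self (hp : p < N) : ZY * opN N p PX = -(opN N p PX * ZY) := by
  simp only [opN_eq_kronPi, kronPi_mul_kronPi, ← neg_one_smul ℂ (kronPi _)]
  refine kronPi_eq_smul_kronPi ⟨p, hp⟩ (-1) ?_ fun j hj => ?_
  · simp [PZ_mul_PX, PX_mul_PZ]
  · simp only [Pi.mul_apply]
    split_ifs <;> simp_all [Fin.ext_iff]

theorem ZY_anticomm_X_succ (hp : p + 1 < N) :
    ZY * opN N (p + 1) PX = -(opN N (p + 1) PX * ZY) := by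
  simp only [opN_eq_kronPi, kronPi_mul_kronPi, ← neg_one_smul ℂ (kronPi _)]
  refine kronPi_eq_smul_kronPi ⟨p + 1, hp⟩ (-1) ?_ fun j hj => ?_
  · simp [PY_mul_PX, PX_mul_PY]
  · simp only [Pi.mul_apply]
    split_ifs <;> simp_all [Fin.ext_iff]

theorem ZY_anticomm_ZZ_self (hp : p + 1 < N) :
    ZY * (opN N p PZ * opN N (p + 1) PZ) = -((opN N p PZ * opN N (p + 1) PZ) * ZY) := by
  simp only [opN_eq_kronPi, kronPi_mul_kronPi, ← neg_one_smul ℂ (kronPi _)]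
  refine kronPi_eq_smul_kronPi ⟨p + 1, hp⟩ (-1) ?_ fun j hj => ?_
  · simp [PY_mul_PZ, PZ_mul_PY]
  · simp only [Pi.mul_apply]
    split_ifs <;> simp_all [Fin.ext_iff]

theorem ZY_anticomm_ZZ_succ (hp : p + 1 < N) :
    ZY * (opN N (p + 1) PZ * opN N (p + 2) PZ)
      = -((opN N (p + 1) PZ * opN N (p + 2) PZ) * ZY) := by
  simp only [opN_eq_kronPi, kronPi_mul_kronPi, ← neg_one_smul ℂ (kronPi _)]
  refine kronPi_eq_smul_kronPi ⟨p + 1, hp⟩ (-1) ?_ fun j hj => ?_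
  · simp [PY_mul_PZ, PZ_mul_PY]
  · simp only [Pi.mul_apply]
    split_ifs <;> simp_all [Fin.ext_iff]

theorem ZY_mul_X_self (hp : p < N) :
    ZY * opN N p PX = I • (opN N p PY * opN N (p + 1) PY) := by
  simp only [opN_eq_kronPi, kronPi_mul_kronPi]
  refine kronPi_eq_smul_kronPi ⟨p, hp⟩ I ?_ fun j hj => ?_
  · simp [PZ_mul_PX]
  · simp only [Pi.mul_apply]
    split_ifs <;> simp_all [Fin.ext_iff]

theorem ZY_mul_X_succ (hp : p + 1 < N) :
    ZY * opN N (p + 1) PX = -I • (opN N p PZ * opN N (p + 1) PZ) := by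
  simp only [opN_eq_kronPi, kronPi_mul_kronPi]
  refine kronPi_eq_smul_kronPi ⟨p + 1, hp⟩ (-I) ?_ fun j hj => ?_
  · simp [PY_mul_PX]
  · simp only [Pi.mul_apply]
    split_ifs <;> simp_all [Fin.ext_iff]

theorem ZY_mul_ZZ_self (hp : p + 1 < N) :
    ZY * (opN N p PZ * opN N (p + 1) PZ) = I • opN N (p + 1) PX := by
  simp only [opN_eq_kronPi, kronPi_mul_kronPi]
  refine kronPi_eq_smul_kronPi ⟨p + 1, hp⟩ I ?_ fun j hj => ?_
  · simp [PY_mul_PZ]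
  · simp only [Pi.mul_apply]
    split_ifs <;> simp_all [Fin.ext_iff, PZ_mul_PZ]

theorem ZY_mul_ZZ_succ (hp : p + 1 < N) :
    ZY * (opN N (p + 1) PZ * opN N (p + 2) PZ)
      = I • (opN N p PZ * opN N (p + 1) PX * opN N (p + 2) PZ) := by
  simp only [opN_eq_kronPi, kronPi_mul_kronPi]
  refine kronPi_eq_smul_kronPi ⟨p + 1, hp⟩ I ?_ fun j hj => ?_
  · simp [PY_mul_PZ]
  · simp only [Pi.mul_apply]
    split_ifs <;> simp_all [Fin.ext_iff]

variable (N p) in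
noncomputable def isingCommZY (h J : ℝ) : Matrix (Fin N → Fin 2) (Fin N → Fin 2) ℂ :=
  (h : ℂ) • ∑ k ∈ Finset.range N \ {p, p + 1}, opN N k PX
    + (J : ℂ) • ∑ k ∈ Finset.range (N - 1) \ {p, p + 1}, opN N k PZ * opN N (k + 1) PZ

variable (N p) in
noncomputable def isingAnticommZY (h J : ℝ) : Matrix (Fin N → Fin 2) (Fin N → Fin 2) ℂ :=
  (h : ℂ) • opN N p PX + (h : ℂ) • opN N (p + 1) PX
    + (J : ℂ) • (opN N p PZ * opN N (p + 1) PZ)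
    + (J : ℂ) • (opN N (p + 1) PZ * opN N (p + 2) PZ)

theorem IsingH_eq_isingCommZY_add_isingAnticommZY (hp : p + 2 < N) (h J : ℝ) :
    IsingH N h J = isingCommZY N p h J + isingAnticommZY N p h J := by
  have hsub (n : ℕ) (hn : p + 1 < n) : {p, p + 1} ⊆ Finset.range n := by
    simp only [Finset.insert_subset_iff, Finset.singleton_subset_iff, Finset.mem_range]; omega
  rw [IsingH, ← Finset.sum_sdiff (hsub N (by omega)),
    ← Finset.sum_sdiff (hsub (N - 1) (by omega)), Finset.sum_pair (by omega),
    Finset.sum_pair (by omega), isingCommZY, isingAnticommZY]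
  module

theorem commute_ZY_isingCommZY (h J : ℝ) : Commute ZY (isingCommZY N p h J) := by
  have ne_of_mem {k n : ℕ} (hk : k ∈ Finset.range n \ {p, p + 1}) : k ≠ p ∧ k ≠ p + 1 := by
    simpa only [Finset.mem_insert, Finset.mem_singleton, not_or] using
      (Finset.mem_sdiff.mp hk).2
  refine ((Commute.sum_right _ _ _ fun k hk => ?_).smul_right _).add_right
    ((Commute.sum_right _ _ _ fun k hk => ?_).smul_right _)
  · exact commute_ZY_X (ne_of_mem hk).1 (ne_of_mem hk).2
  · exact commute_ZY_ZZ (ne_of_mem hk).1 (ne_of_mem hk).2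

theorem ZY_anticomm_isingAnticommZY (hp : p + 1 < N) (h J : ℝ) :
    ZY * isingAnticommZY N p h J = -(isingAnticommZY N p h J * ZY) := by
  simp only [isingAnticommZY, mul_add, add_mul, mul_smul_comm, smul_mul_assoc,
    ZY_anticomm_X_self (by omega : p < N), ZY_anticomm_X_succ hp, ZY_anticomm_ZZ_self hp,
    ZY_anticomm_ZZ_succ hp]
  module

theorem I_smul_ZY_mul_isingAnticommZY (hp : p + 1 < N) (h J : ℝ) :
    I • (ZY * isingAnticommZY N p h J)
      = (h : ℂ) • (opN N p PZ * opN N (p + 1) PZ - opN N p PY * opN N (p + 1) PY)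
        - (J : ℂ) • (opN N (p + 1) PX + opN N p PZ * opN N (p + 1) PX * opN N (p + 2) PZ) := by
  simp only [isingAnticommZY, mul_add, mul_smul_comm, ZY_mul_X_self (by omega : p < N),
    ZY_mul_X_succ hp, ZY_mul_ZZ_self hp, ZY_mul_ZZ_succ hp, smul_smul]
  match_scalars
  · linear_combination (h : ℂ) * I_mul_I
  · linear_combination -(h : ℂ) * I_mul_I
  · linear_combination (J : ℂ) * I_mul_I
  · linear_combination (J : ℂ) * I_mul_I

end ZYGenerator

theorem landscape_ZY_IsingH_general (N : ℕ) (h J : ℝ)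
    (ψ : (Fin N → Fin 2) → ℂ) (θ : ℝ) (p : ℕ) (hp : p < N - 2) :
    star ψ ⬝ᵥ ((NormedSpace.exp ((Complex.I * (θ : ℂ)) • (opN N p PZ * opN N (p + 1) PY)) *
        IsingH N h J *
        NormedSpace.exp ((-(Complex.I * (θ : ℂ))) •
          (opN N p PZ * opN N (p + 1) PY))).mulVec ψ)
      = star ψ ⬝ᵥ ((IsingH N h J).mulVec ψ)
        + (Real.sin (2 * θ) : ℂ) *
            (star ψ ⬝ᵥ (((h : ℂ) • (opN N p PZ * opN N (p + 1) PZ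
                - opN N p PY * opN N (p + 1) PY)).mulVec ψ))
        - (Real.sin (2 * θ) : ℂ) *
            (star ψ ⬝ᵥ (((J : ℂ) • (opN N (p + 1) PX
                + opN N p PZ * opN N (p + 1) PX * opN N (p + 2) PZ)).mulVec ψ))
        - 2 * (Real.sin θ : ℂ) ^ 2 *
            (star ψ ⬝ᵥ (((h : ℂ) • opN N p PX + (h : ℂ) • opN N (p + 1) PX
                + (J : ℂ) • (opN N p PZ * opN N (p + 1) PZ)
                + (J : ℂ) • (opN N (p + 1) PZ * opN N (p + 2) PZ)).mulVec ψ)) := by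
  have hp2 : p + 2 < N := by omega
  rw [IsingH_eq_isingCommZY_add_isingAnticommZY hp2,
    exp_I_smul_mul_add_mul_exp_neg_I_smul ZY_mul_ZY (commute_ZY_isingCommZY h J)
      (ZY_anticomm_isingAnticommZY (by omega) h J),
    I_smul_ZY_mul_isingAnticommZY (by omega), ← IsingH_eq_isingCommZY_add_isingAnticommZY hp2,
    isingAnticommZY]
  simp only [add_mulVec, sub_mulVec, smul_mulVec, dotProduct_add, dotProduct_sub,
    dotProduct_smul, smul_eq_mul]
  ring

/-- the GGA-VQE landscape function for the generator `Z_p Y_{p+1}` and the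
transverse-field Ising Hamiltonian, for an index `0 ≤ p < N − 2`. -/
theorem landscape_ZY_IsingH (N : ℕ) (hN : 3 ≤ N) (h J : ℝ)
    (ψ : (Fin N → Fin 2) → ℂ) (θ : ℝ) (p : ℕ) (hp : p < N - 2) :
    star ψ ⬝ᵥ ((NormedSpace.exp ((Complex.I * (θ : ℂ)) • (opN N p PZ * opN N (p + 1) PY)) *
        IsingH N h J *
        NormedSpace.exp ((-(Complex.I * (θ : ℂ))) •
          (opN N p PZ * opN N (p + 1) PY))).mulVec ψ)
      = star ψ ⬝ᵥ ((IsingH N h J).mulVec ψ)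
        + (Real.sin (2 * θ) : ℂ) *
            (star ψ ⬝ᵥ (((h : ℂ) • (opN N p PZ * opN N (p + 1) PZ
                - opN N p PY * opN N (p + 1) PY)).mulVec ψ))
        - (Real.sin (2 * θ) : ℂ) *
            (star ψ ⬝ᵥ (((J : ℂ) • (opN N (p + 1) PX
                + opN N p PZ * opN N (p + 1) PX * opN N (p + 2) PZ)).mulVec ψ))
        - 2 * (Real.sin θ : ℂ) ^ 2 *
            (star ψ ⬝ᵥ (((h : ℂ) • opN N p PX + (h : ℂ) • opN N (p + 1) PX
                + (J : ℂ) • (opN N p PZ * opN N (p + 1) PZ)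
                + (J : ℂ) • (opN N (p + 1) PZ * opN N (p + 2) PZ)).mulVec ψ)) :=
  landscape_ZY_IsingH_general N h J ψ θ p hp
end
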